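/- Let d be a prime and suppose x^d + c has exact type (m,1) with m ≥ 1, K = ℚ(c). Then d is totally ramified in K/ℚ, and for every i ≥ 1 the ideal (a_i) (with a_i = f^i(0)) is the unique prime ideal of O_K lying above d. -/

import Mathlib

/-!
Write `a k = f^[k] 0`, so `a (k + 1) = a k ^ d + c`. Every `a k` is divisible by `a 1 = c`,
`a k ∣ a (k * m) = a m`, and `a m = a m ^ d + c` gives `a m ∣ c`; so all `a k` with `k ≥ 1`
are associates of `c`. Since `a m ^ d = a (m - 1) ^ d`, the ratio `ζ = a m / a (m - 1)` is a
primitive `d`-th root of unity, whence `(ζ - 1) ^ (d - 1) ~ d`.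

Expanding `(x + y) ^ d` shows `a (k + 1) - a k ≡ c ^ d ^ k [mod d c²]`. At `k = m - 1` this reads
`w ≡ c ^ (d ^ (m - 1) - 1) [mod c d]` for some `w ~ ζ - 1`, and since `w ∣ d` the two sides
divide each other: `c ^ N ~ d` with `N = (d ^ (m - 1) - 1) * (d - 1)`.

Dividing the relation `a m ^ d = a (m - 1) ^ d` by `a m - a (m - 1)` and by `c ^ (d - 1)` gives a
nonzero polynomial of degree at most `N` vanishing at `c`, so `[K : ℚ] ≤ N`. Taking norms in
`c ^ N ~ d` gives `|N(c)| ^ N = d ^ [K : ℚ]`, which forces `|N(c)| = d` and `[K : ℚ] = N`.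
-/

open NumberField Polynomial Finset

def critOrbit {R : Type*} [Semiring R] (d : ℕ) (c : R) (k : ℕ) : R :=
  (fun x => x ^ d + c)^[k] 0

def critOrbitQuot {R : Type*} [Semiring R] (d : ℕ) (c : R) : ℕ → R
  | 0 => 0
  | k + 1 => c ^ (d - 1) * critOrbitQuot d c k ^ d + 1

section CommRing

variable {R S : Type*} [CommRing R] [CommRing S] {d : ℕ} {c : R}

@[simp]
theorem critOrbit_zero : critOrbit d c 0 = 0 := rfl

theorem critOrbit_succ (k : ℕ) : critOrbit d c (k + 1) = critOrbit d c k ^ d + c :=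
  Function.iterate_succ_apply' _ _ _

theorem critOrbit_add (j k : ℕ) :
    critOrbit d c (j + k) = (fun x => x ^ d + c)^[j] (critOrbit d c k) :=
  Function.iterate_add_apply _ _ _ _

theorem map_critOrbit {F : Type*} [FunLike F R S] [RingHomClass F R S] (φ : F) (k : ℕ) :
    φ (critOrbit d c k) = critOrbit d (φ c) k := by
  induction k with
  | zero => simp
  | succ k ih => rw [critOrbit_succ, critOrbit_succ, map_add, map_pow, ih]

theorem map_critOrbitQuot {F : Type*} [FunLike F R S] [RingHomClass F R S] (φ : F) (k : ℕ) :
    φ (critOrbitQuot d c k) = critOrbitQuot d (φ c) k := by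
  induction k with
  | zero => simp [critOrbitQuot]
  | succ k ih => simp [critOrbitQuot, ih]

theorem critOrbit_eq_mul_critOrbitQuot (hd : d ≠ 0) (k : ℕ) :
    critOrbit d c k = c * critOrbitQuot d c k := by
  obtain ⟨e, rfl⟩ : ∃ e, d = e + 1 := ⟨d - 1, by omega⟩
  induction k with
  | zero => simp [critOrbitQuot]
  | succ k ih => rw [critOrbit_succ, ih, critOrbitQuot, Nat.add_sub_cancel]; ring

theorem dvd_critOrbit (hd : d ≠ 0) (k : ℕ) : c ∣ critOrbit d c k :=
  ⟨_, critOrbit_eq_mul_critOrbitQuot hd k⟩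

theorem ne_zero_of_critOrbit_ne (hd : d ≠ 0) {j k : ℕ}
    (h : critOrbit d c j ≠ critOrbit d c k) : c ≠ 0 := by
  rintro rfl
  simp [critOrbit_eq_mul_critOrbitQuot hd] at h

theorem sub_dvd_iterate_sub (x y : R) (j : ℕ) :
    x - y ∣ (fun x => x ^ d + c)^[j] x - (fun x => x ^ d + c)^[j] y := by
  induction j with
  | zero => simp
  | succ j ih =>
    simp only [Function.iterate_succ_apply', add_sub_add_right_eq_sub]
    exact ih.trans (sub_dvd_pow_sub_pow _ _ d)

theorem critOrbit_dvd_critOrbit_mul (j k : ℕ) : critOrbit d c j ∣ critOrbit d c (j * k) := by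
  induction k with
  | zero => simp
  | succ k ih =>
    have h := sub_dvd_iterate_sub (d := d) (c := c) (critOrbit d c (j * k)) 0 j
    rw [sub_zero, ← critOrbit_add] at h
    rw [Nat.mul_succ, add_comm]
    exact dvd_sub_self_right.mp (ih.trans h)

theorem critOrbit_eq_of_le {m k : ℕ} (hfix : critOrbit d c (m + 1) = critOrbit d c m)
    (hk : m ≤ k) : critOrbit d c k = critOrbit d c m := by
  have hpt : Function.IsFixedPt (fun x => x ^ d + c) (critOrbit d c m) := by
    rw [Function.IsFixedPt, ← critOrbit_succ, hfix]
  rw [← Nat.sub_add_cancel hk, critOrbit_add, (hpt.iterate _).eq]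

theorem critOrbit_pow_eq_pow_of_fixed {k : ℕ}
    (hfix : critOrbit d c (k + 2) = critOrbit d c (k + 1)) :
    critOrbit d c (k + 1) ^ d = critOrbit d c k ^ d := by
  linear_combination hfix - critOrbit_succ (d := d) (c := c) (k + 1)
    + critOrbit_succ (d := d) (c := c) k

theorem natCast_mul_sq_dvd_critOrbit_succ_sub (hd : d.Prime) (k : ℕ) :
    (d : R) * c ^ 2 ∣ critOrbit d c (k + 1) - critOrbit d c k - c ^ d ^ k := by
  induction k with
  | zero => simp [critOrbit_succ, zero_pow hd.ne_zero]
  | succ k ih =>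
    set b := critOrbit d c (k + 1) - critOrbit d c k
    obtain ⟨r, hr⟩ := exists_add_pow_prime_eq hd b (critOrbit d c k)
    rw [sub_add_cancel] at hr
    have hb : c ∣ b := dvd_sub (dvd_critOrbit hd.ne_zero _) (dvd_critOrbit hd.ne_zero _)
    have hsplit : critOrbit d c (k + 1 + 1) - critOrbit d c (k + 1) - c ^ d ^ (k + 1)
        = (b ^ d - (c ^ d ^ k) ^ d) + d * b * critOrbit d c k * r := by
      rw [pow_succ, pow_mul]
      linear_combination critOrbit_succ (d := d) (c := c) (k + 1) + hr
        - critOrbit_succ (d := d) (c := c) k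
    have hcb : (d : R) * c ^ 2 ∣ d * b * critOrbit d c k := by
      rw [sq, ← mul_assoc]
      exact mul_dvd_mul (mul_dvd_mul_left _ hb) (dvd_critOrbit hd.ne_zero k)
    rw [hsplit]
    exact dvd_add (ih.trans (sub_dvd_pow_sub_pow _ _ d)) (hcb.mul_right r)

theorem pow_dvd_of_mul_dvd_sub_pow {u : R} (n : ℕ) (h : c * u ∣ u - c ^ n) : c ^ n ∣ u := by
  obtain ⟨t, ht⟩ := h
  -- `u * (1 - c * t) = c ^ n`, so `u = c ^ n * ∑ i < n, (c * t) ^ i + (c * t) ^ n * u`.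
  refine ⟨∑ i ∈ range n, (c * t) ^ i + t ^ n * u, ?_⟩
  linear_combination (∑ i ∈ range n, (c * t) ^ i) * ht - u * mul_neg_geom_sum (c * t) n

end CommRing

section Domain

variable {R : Type*} [CommRing R] [IsDomain R] {d : ℕ} {c : R}

theorem associated_critOrbit (hd : d ≠ 0) {m k : ℕ}
    (hfix : critOrbit d c (m + 1) = critOrbit d c m) (hk : 1 ≤ k) :
    Associated c (critOrbit d c k) := by
  have hkm : critOrbit d c k ∣ critOrbit d c m := by
    simpa [critOrbit_eq_of_le hfix (Nat.le_mul_of_pos_left m hk)]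
      using critOrbit_dvd_critOrbit_mul (d := d) (c := c) k m
  have hmc : critOrbit d c m ∣ c := by
    have h : critOrbit d c m ∣ critOrbit d c m ^ d + c := by rw [← critOrbit_succ, hfix]
    exact (dvd_add_right (dvd_pow_self _ hd)).mp h
  exact associated_of_dvd_dvd (dvd_critOrbit hd k) (hkm.trans hmc)

theorem IsPrimitiveRoot.associated_sub_one_pow_prime {p : ℕ} {ζ : R}
    (hζ : IsPrimitiveRoot ζ p) (hp : p.Prime) : Associated ((ζ - 1) ^ (p - 1)) (p : R) := by
  obtain ⟨n, rfl⟩ : ∃ n, p = n + 1 := ⟨p - 1, (Nat.sub_add_cancel hp.one_le).symm⟩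
  rw [Nat.add_sub_cancel, Nat.cast_add_one, ← hζ.prod_pow_sub_one_eq_order,
    show (ζ - 1) ^ n = ∏ _k ∈ range n, (ζ - 1) by simp]
  refine (Associated.prod _ _ _ fun k hk => hζ.associated_sub_one_pow_sub_one_of_coprime ?_).trans
    (associated_unit_mul_left _ _ (isUnit_neg_one.pow n)).symm
  exact (Nat.coprime_of_lt_prime k.succ_ne_zero (by simpa using mem_range.mp hk) hp).symm

theorem exists_isPrimitiveRoot_critOrbit_eq_mul (hd : d.Prime) {n : ℕ}
    (hfix : critOrbit d c (n + 3) = critOrbit d c (n + 2))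
    (hne : critOrbit d c (n + 2) ≠ critOrbit d c (n + 1)) :
    ∃ ζ : R, IsPrimitiveRoot ζ d ∧ critOrbit d c (n + 2) = critOrbit d c (n + 1) * ζ := by
  obtain ⟨ζ, hζ⟩ := (associated_critOrbit hd.ne_zero hfix (by omega : 1 ≤ n + 1)).symm.trans
    (associated_critOrbit hd.ne_zero hfix (by omega : 1 ≤ n + 2))
  have h0 : critOrbit d c (n + 1) ^ d ≠ 0 :=
    pow_ne_zero _ fun h => hne (by rw [← hζ, h, zero_mul])
  have hζd : (ζ : R) ^ d = 1 := by
    have h := critOrbit_pow_eq_pow_of_fixed hfix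
    rw [← hζ, mul_pow] at h
    exact (mul_eq_left₀ h0).mp h
  have hζ1 : (ζ : R) ≠ 1 := fun h => hne (by rw [← hζ, h, mul_one])
  have := Fact.mk hd
  exact ⟨ζ, orderOf_eq_prime hζd hζ1 ▸ IsPrimitiveRoot.orderOf _, hζ.symm⟩

theorem associated_pow_natCast_of_preperiodic (hd : d.Prime) {n : ℕ}
    (hfix : critOrbit d c (n + 3) = critOrbit d c (n + 2))
    (hne : critOrbit d c (n + 2) ≠ critOrbit d c (n + 1)) :
    Associated (c ^ ((d ^ (n + 1) - 1) * (d - 1))) (d : R) := by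
  have hc : c ≠ 0 := ne_zero_of_critOrbit_ne hd.ne_zero hne
  obtain ⟨ζ, hζ, hζeq⟩ := exists_isPrimitiveRoot_critOrbit_eq_mul hd hfix hne
  obtain ⟨v, hv⟩ := associated_critOrbit hd.ne_zero hfix (by omega : 1 ≤ n + 1)
  set w := (ζ - 1) * v
  have hw : Associated (w ^ (d - 1)) (d : R) := by
    rw [mul_pow]
    exact (associated_mul_unit_left _ _ (v.isUnit.pow _)).trans (hζ.associated_sub_one_pow_prime hd)
  have hwd : w ∣ d := (dvd_pow_self w (by have := hd.two_le; omega)).trans hw.dvd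
  have hcong : c * (d : R) ∣ w - c ^ (d ^ (n + 1) - 1) := by
    have h := natCast_mul_sq_dvd_critOrbit_succ_sub (c := c) hd (n + 1)
    have hD : c ^ d ^ (n + 1) = c * c ^ (d ^ (n + 1) - 1) := by
      rw [← pow_succ', Nat.sub_add_cancel (Nat.one_le_pow _ _ hd.pos)]
    have hdiff : critOrbit d c (n + 1 + 1) - critOrbit d c (n + 1) - c ^ d ^ (n + 1)
        = c * (w - c ^ (d ^ (n + 1) - 1)) := by
      rw [hζeq, ← hv, hD]
      ring
    rw [hdiff, show (d : R) * c ^ 2 = c * (c * d) by ring] at h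
    exact (mul_dvd_mul_iff_left hc).mp h
  have hcw : c ^ (d ^ (n + 1) - 1) ∣ w :=
    pow_dvd_of_mul_dvd_sub_pow _ ((mul_dvd_mul_left c hwd).trans hcong)
  have hwc : w ∣ c ^ (d ^ (n + 1) - 1) :=
    (dvd_sub_right (dvd_refl w)).mp ((hwd.mul_left c).trans hcong)
  rw [pow_mul]
  exact ((associated_of_dvd_dvd hcw hwc).pow_pow).trans hw

end Domain

section Degree

variable {d : ℕ}

@[simp]
theorem critOrbitQuot_one {R : Type*} [Semiring R] (hd : d ≠ 0) (c : R) :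
    critOrbitQuot d c 1 = 1 := by
  simp [critOrbitQuot, hd]

theorem critOrbitQuot_zero_succ {R : Type*} [Semiring R] (hd : 2 ≤ d) (k : ℕ) :
    critOrbitQuot d (0 : R) (k + 1) = 1 := by
  simp [critOrbitQuot, zero_pow (by omega : d - 1 ≠ 0)]

theorem natDegree_critOrbitQuot_X_le {R : Type*} [CommSemiring R] (hd : d ≠ 0) (k : ℕ) :
    (critOrbitQuot d (X : R[X]) (k + 1)).natDegree ≤ d ^ k - 1 := by
  induction k with
  | zero => simp [hd]
  | succ k ih =>
    have hpow : d ≤ d * d ^ k := Nat.le_mul_of_pos_right _ (Nat.one_le_pow _ _ (by omega))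
    calc (critOrbitQuot d (X : R[X]) (k + 1 + 1)).natDegree
        ≤ (d - 1) + d * (d ^ k - 1) := by
          rw [critOrbitQuot]
          refine (natDegree_add_le _ _).trans (max_le ?_ (by simp))
          exact natDegree_mul_le.trans
            (add_le_add (natDegree_X_pow_le _) (natDegree_pow_le.trans (Nat.mul_le_mul_left d ih)))
      _ = d ^ (k + 1) - 1 := by rw [pow_succ', Nat.mul_sub_one]; omega

theorem natDegree_geom_sum₂_le {R : Type*} [CommSemiring R] {p q : R[X]} {D : ℕ}
    (hp : p.natDegree ≤ D) (hq : q.natDegree ≤ D) (n : ℕ) :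
    (∑ j ∈ range n, p ^ j * q ^ (n - 1 - j)).natDegree ≤ (n - 1) * D := by
  refine natDegree_sum_le_of_forall_le _ _ fun j hj => ?_
  have hj : j + (n - 1 - j) = n - 1 := by have := mem_range.mp hj; omega
  calc (p ^ j * q ^ (n - 1 - j)).natDegree ≤ j * p.natDegree + (n - 1 - j) * q.natDegree :=
        natDegree_mul_le.trans (add_le_add natDegree_pow_le natDegree_pow_le)
    _ ≤ j * D + (n - 1 - j) * D := by gcongr
    _ = (n - 1) * D := by rw [← add_mul, hj]

theorem exists_aeval_eq_zero_of_preperiodic {F K : Type*} [Field F] [CharZero F] [CommRing K]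
    [IsDomain K] [Algebra F K] (hd : 2 ≤ d) {x : K} {n : ℕ}
    (hfix : critOrbit d x (n + 3) = critOrbit d x (n + 2))
    (hne : critOrbit d x (n + 2) ≠ critOrbit d x (n + 1)) :
    ∃ H : F[X], H ≠ 0 ∧ aeval x H = 0 ∧ H.natDegree ≤ (d ^ (n + 1) - 1) * (d - 1) := by
  have hd0 : d ≠ 0 := by omega
  set P : ℕ → F[X] := critOrbitQuot d X
  set β : ℕ → K := critOrbitQuot d x
  have hx : x ≠ 0 := ne_zero_of_critOrbit_ne hd0 hne
  have hβpow : β (n + 2) ^ d = β (n + 1) ^ d := by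
    have h := critOrbit_pow_eq_pow_of_fixed hfix
    rw [critOrbit_eq_mul_critOrbitQuot hd0, critOrbit_eq_mul_critOrbitQuot hd0, mul_pow,
      mul_pow] at h
    exact mul_left_cancel₀ (pow_ne_zero _ hx) h
  have hβne : β (n + 2) ≠ β (n + 1) := fun h => hne (by
    rw [critOrbit_eq_mul_critOrbitQuot hd0, critOrbit_eq_mul_critOrbitQuot hd0]
    exact congrArg _ h)
  refine ⟨∑ j ∈ range d, P (n + 2) ^ j * P (n + 1) ^ (d - 1 - j), fun h => ?_, ?_, ?_⟩
  · have hP0 (k : ℕ) : (P (k + 1)).eval 0 = 1 := by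
      rw [← coe_evalRingHom, map_critOrbitQuot, coe_evalRingHom, eval_X,
        critOrbitQuot_zero_succ hd]
    have h0 := congrArg (eval 0) h
    simp only [eval_finsetSum, eval_mul, eval_pow, hP0, one_pow, mul_one, sum_const, card_range,
      eval_zero, nsmul_eq_mul] at h0
    simp [hd0] at h0
  · have hsum := geom_sum₂_mul (β (n + 2)) (β (n + 1)) d
    rw [hβpow, sub_self] at hsum
    simpa [P, β, map_critOrbitQuot] using (mul_eq_zero.mp hsum).resolve_right (sub_ne_zero.mpr hβne)
  · have hle : (P (n + 1)).natDegree ≤ d ^ (n + 1) - 1 :=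
      (natDegree_critOrbitQuot_X_le hd0 n).trans
        (Nat.sub_le_sub_right (Nat.pow_le_pow_right (by omega) n.le_succ) 1)
    exact (natDegree_geom_sum₂_le (natDegree_critOrbitQuot_X_le hd0 (n + 1)) hle d).trans_eq
      (mul_comm _ _)

theorem finrank_le_of_preperiodic {F K : Type*} [Field F] [CharZero F] [Field K] [Algebra F K]
    (hd : 2 ≤ d) {x : K} (hK : IntermediateField.adjoin F {x} = ⊤) {n : ℕ}
    (hfix : critOrbit d x (n + 3) = critOrbit d x (n + 2))
    (hne : critOrbit d x (n + 2) ≠ critOrbit d x (n + 1)) :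
    Module.finrank F K ≤ (d ^ (n + 1) - 1) * (d - 1) := by
  obtain ⟨H, hH0, hHx, hdeg⟩ := exists_aeval_eq_zero_of_preperiodic (F := F) hd hfix hne
  have hint : IsIntegral F x := (isAlgebraic_iff_isIntegral).mp ⟨H, hH0, hHx⟩
  rw [← IntermediateField.finrank_top', ← hK, IntermediateField.adjoin.finrank hint]
  exact (natDegree_le_natDegree (minpoly.degree_le_of_ne_zero F x hH0 hHx)).trans hdeg

end Degree

theorem Nat.eq_and_eq_of_pow_eq_prime_pow {a p n N : ℕ} (hp : p.Prime) (h : a ^ N = p ^ n)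
    (hn : 0 < n) (hnN : n ≤ N) : a = p ∧ n = N := by
  obtain ⟨j, -, rfl⟩ := (Nat.dvd_prime_pow hp).mp (h ▸ dvd_pow_self a (by omega))
  rw [← pow_mul] at h
  have hjN : j * N = n := Nat.pow_right_injective hp.two_le h
  obtain rfl : j = 1 := by
    rcases j with _ | _ | j
    · omega
    · rfl
    · nlinarith
  simp_all

theorem absNorm_span_eq_and_finrank_eq_of_associated {K : Type*} [Field K] [NumberField K]
    {c : 𝓞 K} {p N : ℕ} (hp : p.Prime) (hc : Associated (c ^ N) (p : 𝓞 K))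
    (hN : Module.finrank ℚ K ≤ N) :
    Ideal.absNorm (Ideal.span {c}) = p ∧ Module.finrank ℚ K = N := by
  refine Nat.eq_and_eq_of_pow_eq_prime_pow hp ?_ Module.finrank_pos hN
  rw [← map_pow, Ideal.span_singleton_pow, Ideal.span_singleton_eq_span_singleton.mpr hc,
    Ideal.absNorm_span_natCast, RingOfIntegers.rank]

/-- Let `d` be a prime and suppose `x^d + c` has exact type `(m,1)` with
`m ≥ 1`, `K = ℚ(c)`. Then `d` is totally ramified in `K/ℚ` and, for every `i ≥ 1`,
the ideal `(a_i)` (with `a_i = f^i(0)`) is the unique prime ideal of `𝓞 K` lying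
above `d`: it is prime, `(d) = (a_i)^[K:ℚ]`, and any prime ideal containing `d`
equals `(a_i)`. -/
theorem totally_ramified_of_exact_type_m_one {K : Type*} [Field K] [NumberField K]
    (d m : ℕ) (hd : d.Prime) (hm : 1 ≤ m)
    (c : 𝓞 K)
    (hK : IntermediateField.adjoin ℚ {algebraMap (𝓞 K) K c} = ⊤)
    (f : 𝓞 K → 𝓞 K) (hf : f = fun x => x ^ d + c)
    (a : ℕ → 𝓞 K) (ha : ∀ i, a i = f^[i] 0)
    (hper : f^[m + 1] 0 = f^[m] 0)
    (htail : ∀ k, k < m → f^[k + 1] 0 ≠ f^[k] 0)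
    (i : ℕ) (hi : 1 ≤ i) :
    (Ideal.span {a i}).IsPrime ∧
    Ideal.span {(d : 𝓞 K)} = (Ideal.span {a i}) ^ (Module.finrank ℚ K) ∧
    ∀ q : Ideal (𝓞 K), q.IsPrime → (d : 𝓞 K) ∈ q → q = Ideal.span {a i} := by
  subst hf
  have hfix : critOrbit d c (m + 1) = critOrbit d c m := hper
  have hne : ∀ k < m, critOrbit d c (k + 1) ≠ critOrbit d c k := htail
  obtain ⟨n, rfl⟩ : ∃ n, m = n + 2 := by
    refine ⟨m - 2, (Nat.sub_add_cancel ?_).symm⟩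
    by_contra h
    obtain rfl : m = 1 := by omega
    refine hne 0 one_pos ?_
    simpa [hd.ne_zero] using critOrbit_pow_eq_pow_of_fixed hfix
  have hc := associated_pow_natCast_of_preperiodic hd hfix (hne (n + 1) (by omega))
  have hrank : Module.finrank ℚ K ≤ (d ^ (n + 1) - 1) * (d - 1) := by
    refine finrank_le_of_preperiodic hd.two_le hK ?_ ?_
    · simpa only [map_critOrbit] using congrArg (algebraMap (𝓞 K) K) hfix
    · simpa only [map_critOrbit] using
        (FaithfulSMul.algebraMap_injective (𝓞 K) K).ne (hne (n + 1) (by omega))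
  obtain ⟨hnorm, hN⟩ := absNorm_span_eq_and_finrank_eq_of_associated hd hc hrank
  have hspan : Ideal.span {a i} = Ideal.span {c} := by
    rw [ha i, Ideal.span_singleton_eq_span_singleton]
    exact (associated_critOrbit hd.ne_zero hfix hi).symm
  have hprime : (Ideal.span {c}).IsPrime := Ideal.isPrime_of_irreducible_absNorm (hnorm ▸ hd)
  have hdpow : Ideal.span {(d : 𝓞 K)} = Ideal.span {c} ^ Module.finrank ℚ K := by
    rw [hN, Ideal.span_singleton_pow, Ideal.span_singleton_eq_span_singleton.mpr hc]
  refine hspan ▸ ⟨hprime, hdpow, fun q hq hdq => ?_⟩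
  have hc0 : Ideal.span {c} ≠ ⊥ := fun h => hd.ne_zero (by rw [← hnorm, h, Ideal.absNorm_bot])
  exact ((hprime.isMaximal hc0).eq_of_le hq.ne_top
    (hq.le_of_pow_le (hdpow ▸ (Ideal.span_singleton_le_iff_mem _).mpr hdq))).symm
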